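/- Let μ ≥ 0, L > 0, and let f : V → ℝ be differentiable, μ-convex, with L-Lipschitz gradient and global minimizer x*. Let γ₀ > 0, x₀, v₀ ∈ V, and generate sequences by: α_k = √(γ_k/L), β_k = 1/(Lα_k), (x_{k+1} - x_k)/α_k = v_k - x_{k+1} - β_k∇f(x_k), (v_{k+1} - v_k)/α_k = (μ/γ_k)(x_{k+1} - v_{k+1}) - (1/γ_k)∇f(x_{k+1}), (γ_{k+1} - γ_k)/α_k = μ - γ_{k+1}. Define λ₀ = 1, λ_k = ∏_{i=0}^{k-1} 1/(1+α_i) and L₀ = f(x₀) - f(x*) + (γ₀/2)‖v₀ - x*‖². Then for every k ≥ 0, ‖∇f(x_k)‖² ≤ 2L·λ_k·L₀. -/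

import Mathlib

/-!
The Lyapunov function `E k = f (x k) - f x⋆ + γ k / 2 * ‖v k - x⋆‖²` satisfies
`(1 + α k) E (k + 1) + ‖∇f (x k)‖² / (2L) ≤ E k`. This one-step estimate adds co-coercivity of
`∇f` between `x k` and `x (k + 1)` (convexity plus the descent lemma), `μ`-convexity between
`x (k + 1)` and `x⋆`, and an exact identity of the scheme whose remainder is
`-(α μ / 2 + μ² / (2L)) ‖x (k + 1) - v (k + 1)‖² ≤ 0`. Iterating gives `E k ≤ λ k E 0`, and
`E (k + 1) ≥ 0` leaves `‖∇f (x k)‖² / (2L) ≤ E k`.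
-/

open scoped RealInnerProductSpace

theorem le_prod_inv_mul_of_one_add_mul_le {E a : ℕ → ℝ} (ha : ∀ k, 0 < 1 + a k)
    (h : ∀ k, (1 + a k) * E (k + 1) ≤ E k) (k : ℕ) :
    E k ≤ (∏ i ∈ Finset.range k, (1 + a i)⁻¹) * E 0 := by
  induction k with
  | zero => simp
  | succ k ih =>
    calc E (k + 1) ≤ (1 + a k)⁻¹ * E k := by rw [le_inv_mul_iff₀ (ha k)]; exact h k
      _ ≤ (1 + a k)⁻¹ * ((∏ i ∈ Finset.range k, (1 + a i)⁻¹) * E 0) :=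
          mul_le_mul_of_nonneg_left ih (inv_pos.2 (ha k)).le
      _ = (∏ i ∈ Finset.range (k + 1), (1 + a i)⁻¹) * E 0 := by
          rw [Finset.prod_range_succ]; ring

theorem one_add_mul_eq_of_sub_div_eq_sub {α γ γ' μ : ℝ} (hα : α ≠ 0)
    (h : (γ' - γ) / α = μ - γ') : (1 + α) * γ' = γ + α * μ := by
  rw [div_eq_iff hα] at h
  linarith

section

variable {V : Type*} [NormedAddCommGroup V] [InnerProductSpace ℝ V]

theorem hnag_lyapunov_gap_eq {x x' v v' xstar g g' : V} {μ L α β γ : ℝ} (hL : L ≠ 0)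
    (hα : α ≠ 0) (hγ : γ = L * α ^ 2) (hβ : β = 1 / (L * α))
    (hx : x' - x = α • (v - x' - β • g))
    (hv : v' - v = α • ((μ / γ) • (x' - v') - (1 / γ) • g')) :
    (γ + α * μ) / 2 * ‖v' - xstar‖ ^ 2 - γ / 2 * ‖v - xstar‖ ^ 2 + ⟪g', x' - x⟫
      + α * ⟪g', x' - xstar⟫ - α * μ / 2 * ‖x' - xstar‖ ^ 2 + (‖g‖ ^ 2 - ‖g - g'‖ ^ 2) / (2 * L)
      = -(α * μ / 2 + μ ^ 2 / (2 * L)) * ‖x' - v'‖ ^ 2 := by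
  subst hγ hβ
  rw [hx]
  obtain rfl : v = v' - α • ((μ / (L * α ^ 2)) • (x' - v') - (1 / (L * α ^ 2)) • g') := by
    rw [← hv, sub_sub_cancel]
  obtain ⟨a, rfl⟩ : ∃ a, x' = a + xstar := ⟨x' - xstar, (sub_add_cancel _ _).symm⟩
  obtain ⟨c, rfl⟩ : ∃ c, v' = c + xstar := ⟨v' - xstar, (sub_add_cancel _ _).symm⟩
  simp only [add_sub_cancel_right, add_sub_add_right_eq_sub, sub_right_comm _ (α • _) xstar,
    ← real_inner_self_eq_norm_sq, inner_sub_left, inner_sub_right,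
    inner_add_right, real_inner_smul_left, real_inner_smul_right]
  rw [real_inner_comm a c, real_inner_comm g' c, real_inner_comm g' a, real_inner_comm g g']
  field_simp
  ring

variable [CompleteSpace V] {f : V → ℝ} {f' : V → V} {L : ℝ}

theorem le_add_inner_add_sq_of_lipschitz_gradient (hf : ∀ z, HasGradientAt f (f' z) z)
    (hlip : ∀ z w, ‖f' z - f' w‖ ≤ L * ‖z - w‖) (z w : V) :
    f w ≤ f z + ⟪f' z, w - z⟫ + L / 2 * ‖w - z‖ ^ 2 := by
  set d := w - z
  set φ : ℝ → ℝ := fun t ↦ f (z + t • d) - t * ⟪f' z, d⟫ - L / 2 * t ^ 2 * ‖d‖ ^ 2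
  have hφ : ∀ t, HasDerivAt φ (⟪f' (z + t • d), d⟫ - ⟪f' z, d⟫ - L * t * ‖d‖ ^ 2) t := by
    intro t
    have hline : HasDerivAt (fun t : ℝ ↦ z + t • d) d t := by
      simpa using ((hasDerivAt_id t).smul_const d).const_add z
    have := (((hf _).hasFDerivAt.comp_hasDerivAt t hline).sub
      ((hasDerivAt_id t).mul_const ⟪f' z, d⟫)).sub
      (((hasDerivAt_pow 2 t).const_mul (L / 2)).mul_const (‖d‖ ^ 2))
    exact this.congr_deriv (by rw [InnerProductSpace.toDual_apply_apply]; ring)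
  have hφ_nonpos : ∀ t ∈ interior (Set.Ici (0 : ℝ)),
      ⟪f' (z + t • d), d⟫ - ⟪f' z, d⟫ - L * t * ‖d‖ ^ 2 ≤ 0 := by
    intro t ht
    rw [interior_Ici, Set.mem_Ioi] at ht
    rw [sub_nonpos]
    calc ⟪f' (z + t • d), d⟫ - ⟪f' z, d⟫ = ⟪f' (z + t • d) - f' z, d⟫ := (inner_sub_left ..).symm
      _ ≤ ‖f' (z + t • d) - f' z‖ * ‖d‖ := real_inner_le_norm _ _
      _ ≤ L * ‖t • d‖ * ‖d‖ := by gcongr; simpa using hlip (z + t • d) z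
      _ = L * t * ‖d‖ ^ 2 := by rw [norm_smul, Real.norm_of_nonneg ht.le]; ring
  have hφ_anti := antitoneOn_of_hasDerivWithinAt_nonpos (convex_Ici 0)
    (continuous_iff_continuousAt.2 fun t ↦ (hφ t).continuousAt).continuousOn
    (fun t _ ↦ (hφ t).hasDerivWithinAt) hφ_nonpos
  have h10 : φ 1 ≤ φ 0 := hφ_anti (Set.mem_Ici.2 le_rfl) (Set.mem_Ici.2 zero_le_one) zero_le_one
  simp only [φ, d, one_smul, zero_smul, add_zero, add_sub_cancel, one_mul, one_pow, mul_one,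
    zero_mul, sub_zero, zero_pow two_ne_zero, mul_zero] at h10
  linarith

theorem add_inner_add_norm_sub_sq_le_of_lipschitz_gradient (hL : 0 < L)
    (hf : ∀ z, HasGradientAt f (f' z) z) (hconv : ∀ z w, f w + ⟪f' w, z - w⟫ ≤ f z)
    (hlip : ∀ z w, ‖f' z - f' w‖ ≤ L * ‖z - w‖) (z w : V) :
    f z + ⟪f' z, w - z⟫ + ‖f' w - f' z‖ ^ 2 / (2 * L) ≤ f w := by
  set u := f' w - f' z
  -- Compare `f z` and `f w` through the value of `f` at the gradient step `w - L⁻¹ • u`.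
  have hdesc := le_add_inner_add_sq_of_lipschitz_gradient hf hlip w (w - L⁻¹ • u)
  have hlow := hconv (w - L⁻¹ • u) z
  rw [sub_sub_cancel_left, norm_neg, norm_smul, inner_neg_right, real_inner_smul_right,
    Real.norm_of_nonneg (inv_nonneg.2 hL.le)] at hdesc
  rw [sub_right_comm, inner_sub_right, real_inner_smul_right] at hlow
  have hu : L / 2 * (L⁻¹ * ‖u‖) ^ 2 - (L⁻¹ * ⟪f' w, u⟫ - L⁻¹ * ⟪f' z, u⟫)
      = -(‖u‖ ^ 2 / (2 * L)) := by
    rw [← mul_sub, ← inner_sub_left, real_inner_self_eq_norm_sq]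
    field_simp
    ring
  linarith

theorem hnag_lyapunov_step {μ : ℝ} (hμ : 0 ≤ μ) (hL : 0 < L)
    (hf : ∀ z, HasGradientAt f (f' z) z)
    (hconv : ∀ z w, f z - f w - ⟪f' w, z - w⟫ ≥ μ / 2 * ‖z - w‖ ^ 2)
    (hlip : ∀ z w, ‖f' z - f' w‖ ≤ L * ‖z - w‖) {x x' v v' xstar : V} {α β γ γ' : ℝ}
    (hγ : 0 < γ) (hα : α = √(γ / L)) (hβ : β = 1 / (L * α))
    (hx : α⁻¹ • (x' - x) = v - x' - β • f' x)
    (hv : α⁻¹ • (v' - v) = (μ / γ) • (x' - v') - (1 / γ) • f' x')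
    (hγ' : (γ' - γ) / α = μ - γ') :
    (1 + α) * (f x' - f xstar + γ' / 2 * ‖v' - xstar‖ ^ 2) + ‖f' x‖ ^ 2 / (2 * L)
      ≤ f x - f xstar + γ / 2 * ‖v - xstar‖ ^ 2 := by
  have hα0 : 0 < α := hα ▸ Real.sqrt_pos.2 (div_pos hγ hL)
  have hγα : γ = L * α ^ 2 := by
    rw [hα, Real.sq_sqrt (div_pos hγ hL).le]
    field_simp
  have hgap := hnag_lyapunov_gap_eq (xstar := xstar) hL.ne' hα0.ne' hγα hβ
    ((inv_smul_eq_iff₀ hα0.ne').1 hx) ((inv_smul_eq_iff₀ hα0.ne').1 hv)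
  have hgap_nonneg : 0 ≤ (α * μ / 2 + μ ^ 2 / (2 * L)) * ‖x' - v'‖ ^ 2 := by positivity
  have hcoco := add_inner_add_norm_sub_sq_le_of_lipschitz_gradient hL hf
    (fun z w ↦ by nlinarith [hconv z w, norm_nonneg (z - w)]) hlip x' x
  rw [← neg_sub x' x, inner_neg_right] at hcoco
  have hsc : f x' - f xstar ≤ ⟪f' x', x' - xstar⟫ - μ / 2 * ‖x' - xstar‖ ^ 2 := by
    have := hconv xstar x'
    rw [← neg_sub x' xstar, inner_neg_right, norm_neg] at this
    linarith
  linear_combination hcoco + mul_le_mul_of_nonneg_left hsc hα0.le + hgap_nonneg + hgap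
    + ‖v' - xstar‖ ^ 2 / 2 * one_add_mul_eq_of_sub_div_eq_sub hα0.ne' hγ'

end

/-- Decay of the gradient norm for the explicit HNAG scheme (Algorithm 1):
`‖∇f(x_k)‖² ≤ 2L λ_k L₀`. -/
theorem explicit_hnag_gradient_decay
    {V : Type*} [NormedAddCommGroup V] [InnerProductSpace ℝ V] [CompleteSpace V]
    (μ L : ℝ) (hμ : 0 ≤ μ) (hL : 0 < L) (f : V → ℝ) (f' : V → V)
    (hdiff : ∀ z, HasGradientAt f (f' z) z)
    (hconv : ∀ z w : V, f z - f w - ⟪f' w, z - w⟫ ≥ μ / 2 * ‖z - w‖ ^ 2)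
    (hlip : ∀ z w : V, ‖f' z - f' w‖ ≤ L * ‖z - w‖)
    (xstar : V) (hmin : ∀ z, f xstar ≤ f z)
    (x v : ℕ → V) (γ α β lam : ℕ → ℝ) (hγ0 : 0 < γ 0)
    (hαdef : ∀ k, α k = Real.sqrt (γ k / L)) (hβ : ∀ k, β k = 1 / (L * α k))
    (h1 : ∀ k, (α k)⁻¹ • (x (k + 1) - x k) = v k - x (k + 1) - β k • f' (x k))
    (h2 : ∀ k, (α k)⁻¹ • (v (k + 1) - v k)
        = (μ / γ k) • (x (k + 1) - v (k + 1)) - (1 / γ k) • f' (x (k + 1)))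
    (h3 : ∀ k, (γ (k + 1) - γ k) / α k = μ - γ (k + 1))
    (hlam : ∀ k, lam k = ∏ i ∈ Finset.range k, (1 + α i)⁻¹)
    (k : ℕ) :
    ‖f' (x k)‖ ^ 2
      ≤ 2 * L * lam k * (f (x 0) - f xstar + γ 0 / 2 * ‖v 0 - xstar‖ ^ 2) := by
  have hα : ∀ k, 0 < γ k → 0 < α k := fun k hk ↦ hαdef k ▸ Real.sqrt_pos.2 (div_pos hk hL)
  have hγ : ∀ k, 0 < γ k := by
    intro k
    induction k with
    | zero => exact hγ0
    | succ k ih =>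
      have hαk := hα k ih
      refine pos_of_mul_pos_right ?_ (by positivity : (0 : ℝ) ≤ 1 + α k)
      rw [one_add_mul_eq_of_sub_div_eq_sub hαk.ne' (h3 k)]
      positivity
  set E : ℕ → ℝ := fun k ↦ f (x k) - f xstar + γ k / 2 * ‖v k - xstar‖ ^ 2
  have hstep k : (1 + α k) * E (k + 1) + ‖f' (x k)‖ ^ 2 / (2 * L) ≤ E k :=
    hnag_lyapunov_step hμ hL hdiff hconv hlip (hγ k) (hαdef k) (hβ k) (h1 k) (h2 k) (h3 k)
  have hE k : 0 ≤ E k := add_nonneg (sub_nonneg.2 (hmin _)) (by have := hγ k; positivity)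
  have hdecay : E k ≤ lam k * E 0 := hlam k ▸ le_prod_inv_mul_of_one_add_mul_le
    (fun k ↦ by linarith [hα k (hγ k)])
    (fun k ↦ by linarith [hstep k, (by positivity : 0 ≤ ‖f' (x k)‖ ^ 2 / (2 * L))]) k
  have hgrad : ‖f' (x k)‖ ^ 2 / (2 * L) ≤ lam k * E 0 := by
    have := mul_nonneg (by linarith [hα k (hγ k)] : (0 : ℝ) ≤ 1 + α k) (hE (k + 1))
    linarith [hstep k]
  rwa [div_le_iff₀ (by positivity), mul_comm, ← mul_assoc] at hgrad
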